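/- arXiv:1007.1085 — 6 statements merged into one kernel-verified Lean document; each statement's English description precedes it below -/
import Mathlib

section
/- Let $e$ be a projection in a $C^*$-algebra $A$. The map $I \mapsto Ie$ is a bijective correspondence between the closed ideals of the TRO $eA$ (closed subspaces $I \subseteq eA$ with $I(eA)^*(eA) + (eA)I^*(eA) + (eA)(eA)^*I \subseteq I$) and the closed two-sided ideals of the C*-algebra $eAe$. -/
/-- A norm-closed two-sided (ring) ideal of a C*-algebra `A`, as a set. -/
def IsClosedTwoSidedIdeal {A : Type*} [CStarAlgebra A] (I : Set A) : Prop :=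
  IsClosed I ∧ (0 : A) ∈ I ∧ (∀ x ∈ I, ∀ y ∈ I, x + y ∈ I) ∧
    (∀ x ∈ I, -x ∈ I) ∧ (∀ c : ℂ, ∀ x ∈ I, c • x ∈ I) ∧
    (∀ a : A, ∀ x ∈ I, a * x ∈ I ∧ x * a ∈ I)

/-- A norm closed two-sided ideal of the C*-subalgebra of `A` with carrier set `B`. -/
def IsClosedIdealOf {A : Type*} [CStarAlgebra A] (K B : Set A) : Prop :=
  IsClosed K ∧ K ⊆ B ∧ (0 : A) ∈ K ∧ (∀ x ∈ K, ∀ y ∈ K, x + y ∈ K) ∧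
    (∀ x ∈ K, -x ∈ K) ∧ (∀ c : ℂ, ∀ x ∈ K, c • x ∈ K) ∧
    (∀ b ∈ B, ∀ x ∈ K, b * x ∈ K ∧ x * b ∈ K)

/-- A norm closed TRO-ideal of the TRO `eA` (for a projection `e`): a closed subspace
`I ⊆ eA` such that `x y* z ∈ I` whenever one of `x, y, z` lies in `I` and the others
in `eA`. -/
def IsTROIdealOf {A : Type*} [CStarAlgebra A] (I T : Set A) : Prop :=
  IsClosed I ∧ I ⊆ T ∧ (0 : A) ∈ I ∧ (∀ x ∈ I, ∀ y ∈ I, x + y ∈ I) ∧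
    (∀ x ∈ I, -x ∈ I) ∧ (∀ c : ℂ, ∀ x ∈ I, c • x ∈ I) ∧
    (∀ x ∈ I, ∀ y ∈ T, ∀ z ∈ T,
      x * star y * z ∈ I ∧ y * star x * z ∈ I ∧ y * star z * x ∈ I)

/- ## Auxiliary lemmas -/

lemma TRO.real_bound {w : ℝ} (hw : 0 < w) (t : ℝ) :
    |(1 - t * (t * (t ^ 2 + w ^ 2)⁻¹) ^ 2 * t) * t *
      (1 - t * (t * (t ^ 2 + w ^ 2)⁻¹) ^ 2 * t)| ≤ 4 * w := by
  have hD : (0:ℝ) < t ^ 2 + w ^ 2 := by positivity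
  set d : ℝ := (t ^ 2 + w ^ 2)⁻¹ with hd
  have hdpos : 0 < d := inv_pos.mpr hD
  have hdD : (t ^ 2 + w ^ 2) * d = 1 := mul_inv_cancel₀ hD.ne'
  set Q : ℝ := 1 - t * (t * d) ^ 2 * t with hQ
  have hft : Q = w ^ 2 * (2 * t ^ 2 + w ^ 2) * d ^ 2 := by
    rw [hQ, hd]
    field_simp
    ring
  have hQnonneg : 0 ≤ Q := by rw [hft]; positivity
  have habs : |Q * t * Q| = Q * Q * |t| := by
    rw [abs_mul, abs_mul, abs_of_nonneg hQnonneg]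
    ring
  rw [habs]
  have hwt : w * |t| ≤ t ^ 2 + w ^ 2 := by
    nlinarith [sq_nonneg (|t| - w), sq_abs t, abs_nonneg t]
  have h5 : w * (d * |t|) ≤ 1 := by
    have h6 : d * (w * |t|) ≤ d * (t ^ 2 + w ^ 2) :=
      mul_le_mul_of_nonneg_left hwt hdpos.le
    calc w * (d * |t|) = d * (w * |t|) := by ring
      _ ≤ d * (t ^ 2 + w ^ 2) := h6
      _ = 1 := by rw [mul_comm]; exact hdD
  have hQle : Q ≤ 2 * (w ^ 2 * d) := by
    rw [hft]
    have h1 : 2 * t ^ 2 + w ^ 2 ≤ 2 * (t ^ 2 + w ^ 2) := by nlinarith [sq_nonneg w]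
    calc w ^ 2 * (2 * t ^ 2 + w ^ 2) * d ^ 2
        ≤ w ^ 2 * (2 * (t ^ 2 + w ^ 2)) * d ^ 2 := by
          nlinarith [mul_le_mul_of_nonneg_right
            (mul_le_mul_of_nonneg_left h1 (sq_nonneg w)) (sq_nonneg d)]
      _ = 2 * (w ^ 2 * d) * ((t ^ 2 + w ^ 2) * d) := by ring
      _ = 2 * (w ^ 2 * d) := by rw [hdD, mul_one]
  have hQle2 : Q ≤ 2 := by
    have h7 : w ^ 2 * d ≤ 1 := by
      calc w ^ 2 * d ≤ (t ^ 2 + w ^ 2) * d :=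
            mul_le_mul_of_nonneg_right (by nlinarith [sq_nonneg t]) hdpos.le
        _ = 1 := hdD
    linarith
  have hstep1 : Q * Q * |t| ≤ 2 * (Q * |t|) := by
    nlinarith [mul_nonneg (mul_nonneg (sub_nonneg.mpr hQle2) hQnonneg) (abs_nonneg t)]
  have h2 : Q * |t| ≤ 2 * (w ^ 2 * (d * |t|)) := by
    calc Q * |t| ≤ 2 * (w ^ 2 * d) * |t| :=
          mul_le_mul_of_nonneg_right hQle (abs_nonneg t)
      _ = 2 * (w ^ 2 * (d * |t|)) := by ring
  have h3 : w ^ 2 * (d * |t|) ≤ w := by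
    nlinarith [mul_le_mul_of_nonneg_left h5 hw.le]
  linarith

set_option maxHeartbeats 1000000 in
/-- The key approximation: `x ≈ (x x*) m (x x*) x` for a suitable self-adjoint `m`. -/
lemma TRO.cstar_approx {A : Type*} [CStarAlgebra A] (x : A) {ε : ℝ} (hε : 0 < ε) :
    ∃ m : A, IsSelfAdjoint m ∧
      ‖x - (x * star x) * m * (x * star x) * x‖ < ε := by
  set k := x * star x with hkdef
  have hksa : IsSelfAdjoint k := .mul_star_self x
  have hwpos : (0:ℝ) < ε ^ 2 / 8 := by positivity
  set w : ℝ := ε ^ 2 / 8 with hw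
  set g : ℝ → ℝ := fun t => (t * ((t ^ 2 + w ^ 2)⁻¹)) ^ 2 with hg
  have hden : ∀ t : ℝ, (0:ℝ) < t ^ 2 + w ^ 2 := fun t => by positivity
  have hgcont : Continuous g := by
    apply Continuous.pow
    exact continuous_id.mul (Continuous.inv₀ (by fun_prop) fun t => (hden t).ne')
  set f : ℝ → ℝ := fun t => 1 - t * g t * t with hf
  have hfc : Continuous f := by fun_prop
  refine ⟨cfc g k, cfc_predicate g k, ?_⟩
  have e1 : cfc (fun t : ℝ => t * g t) k = k * cfc g k :=
    (cfc_mul (fun t : ℝ => t) g k (by fun_prop) hgcont.continuousOn).trans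
      (by rw [cfc_id' ℝ k])
  have e2 : cfc (fun t : ℝ => t * g t * t) k = k * cfc g k * k :=
    (cfc_mul (fun t : ℝ => t * g t) (fun t : ℝ => t) k (by fun_prop) (by fun_prop)).trans
      (by rw [cfc_id' ℝ k, e1])
  have hq : cfc f k = 1 - k * cfc g k * k := by
    calc cfc f k
        = cfc (fun _ : ℝ => (1:ℝ)) k - cfc (fun t : ℝ => t * g t * t) k :=
          cfc_sub (fun _ : ℝ => (1:ℝ)) (fun t : ℝ => t * g t * t) k
            (by fun_prop) (by fun_prop)
      _ = 1 - k * cfc g k * k := by rw [cfc_const_one ℝ k, e2]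
  have hqsa : IsSelfAdjoint (cfc f k) := cfc_predicate f k
  have hxe : x - k * cfc g k * k * x = cfc f k * x := by
    rw [hq, sub_mul, one_mul]
  rw [hxe]
  have e4 : cfc (fun t : ℝ => f t * t) k = cfc f k * k :=
    (cfc_mul f (fun t : ℝ => t) k hfc.continuousOn (by fun_prop)).trans
      (by rw [cfc_id' ℝ k])
  have e5 : cfc (fun t : ℝ => f t * t * f t) k = cfc f k * k * cfc f k :=
    (cfc_mul (fun t : ℝ => f t * t) f k (by fun_prop) hfc.continuousOn).trans
      (by rw [e4])
  have hnorm1 : ‖cfc f k * x‖ * ‖cfc f k * x‖ = ‖cfc f k * k * cfc f k‖ := by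
    rw [← CStarRing.norm_self_mul_star (x := cfc f k * x)]
    congr 1
    rw [star_mul, hqsa.star_eq, hkdef]
    noncomm_ring
  have hnorm2 : ‖cfc f k * k * cfc f k‖ ≤ 4 * w := by
    rw [← e5]
    exact norm_cfc_le (by positivity) fun t _ => by
      rw [Real.norm_eq_abs]
      exact TRO.real_bound hwpos t
  have hfin : ‖cfc f k * x‖ * ‖cfc f k * x‖ ≤ 4 * w := by
    rw [hnorm1]; exact hnorm2
  rw [hw] at hfin
  nlinarith [norm_nonneg (cfc f k * x), hε, hfin]

namespace TRO

variable {A : Type*} [CStarAlgebra A] {e : A}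

lemma memT {x : A} (h : e * x = x) : x ∈ Set.range (fun a => e * a) := ⟨x, h⟩

lemma eT (he₂ : e * e = e) {x : A} (hx : x ∈ Set.range (fun a => e * a)) :
    e * x = x := by
  obtain ⟨a, rfl⟩ := hx
  show e * (e * a) = e * a
  rw [← mul_assoc, he₂]

lemma star_mul_e (he₁ : IsSelfAdjoint e) {q : A} (hq : e * q = q) :
    star q * e = star q := by
  have h := congrArg star hq
  rwa [star_mul, he₁.star_eq] at h

lemma memB' (he₁ : IsSelfAdjoint e) {p q : A} (hp : e * p = p) (hq : e * q = q) :
    p * star q ∈ Set.range (fun a => e * a * e) := by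
  refine ⟨p * star q, ?_⟩
  show e * (p * star q) * e = p * star q
  rw [← mul_assoc, hp, mul_assoc, star_mul_e he₁ hq]

lemma eB (he₂ : e * e = e) {x : A} (hx : x ∈ Set.range (fun a => e * a * e)) :
    e * x = x := by
  obtain ⟨a, rfl⟩ := hx
  show e * (e * a * e) = e * a * e
  rw [← mul_assoc, ← mul_assoc, he₂]

lemma Be (he₂ : e * e = e) {x : A} (hx : x ∈ Set.range (fun a => e * a * e)) :
    x * e = x := by
  obtain ⟨a, rfl⟩ := hx
  show e * a * e * e = e * a * e
  rw [mul_assoc (e * a), he₂]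

lemma B_eq (he₂ : e * e = e) :
    Set.range (fun a => e * a * e) = {x : A | e * x * e = x} := by
  ext x
  constructor
  · intro hx
    have h1 := eB he₂ hx
    have h2 := Be he₂ hx
    show e * x * e = x
    rw [h1, h2]
  · intro h
    exact ⟨x, h⟩

lemma B_isClosed (he₂ : e * e = e) :
    IsClosed (Set.range (fun a : A => e * a * e)) := by
  rw [B_eq he₂]
  exact isClosed_eq (by fun_prop) continuous_id

lemma B_star (he₁ : IsSelfAdjoint e) {x : A}
    (hx : x ∈ Set.range (fun a => e * a * e)) :
    star x ∈ Set.range (fun a => e * a * e) := by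
  obtain ⟨a, rfl⟩ := hx
  refine ⟨star a, ?_⟩
  show e * star a * e = star (e * a * e)
  rw [star_mul, star_mul, he₁.star_eq, mul_assoc]

/-- The image of a TRO ideal under `· * e` is `I ∩ B`. -/
lemma image_eq (he₁ : IsSelfAdjoint e) (he₂ : e * e = e) {I : Set A}
    (hI : IsTROIdealOf I (Set.range (fun a => e * a))) :
    (fun x => x * e) '' I = I ∩ Set.range (fun a => e * a * e) := by
  obtain ⟨hIc, hIs, hI0, hIa, hIn, hIsm, hItro⟩ := hI
  ext z
  constructor
  · rintro ⟨x, hx, rfl⟩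
    have hxT : e * x = x := eT he₂ (hIs hx)
    constructor
    · have h := (hItro x hx e (memT he₂) e (memT he₂)).1
      have heq : x * star e * e = x * e := by
        rw [he₁.star_eq, mul_assoc, he₂]
      rwa [heq] at h
    · show x * e ∈ Set.range (fun a => e * a * e)
      have heq : x * e = x * star e := by rw [he₁.star_eq]
      rw [heq]
      exact memB' he₁ hxT he₂
  · rintro ⟨hzI, hzB⟩
    exact ⟨z, hzI, Be he₂ hzB⟩

/-- Recovery: if `x ∈ eA` and `x x* ∈ I` for a TRO ideal `I`, then `x ∈ I`. -/
lemma recover (he₂ : e * e = e) {I : Set A}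
    (hI : IsTROIdealOf I (Set.range (fun a => e * a))) {x : A}
    (hx : e * x = x) (hk : x * star x ∈ I) : x ∈ I := by
  obtain ⟨hIc, hIs, hI0, hIa, hIn, hIsm, hItro⟩ := hI
  rw [← hIc.closure_eq, Metric.mem_closure_iff]
  intro ε hε
  obtain ⟨m, hm, hnorm⟩ := TRO.cstar_approx x hε
  have hek : e * (x * star x) = x * star x := by rw [← mul_assoc, hx]
  refine ⟨x * star x * m * (x * star x) * x, ?_, by rw [dist_eq_norm]; exact hnorm⟩
  have hkm : x * star x * m ∈ Set.range (fun a => e * a) :=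
    memT (by rw [← mul_assoc, hek])
  have h := (hItro (x * star x) hk (x * star x * m) hkm x (memT hx)).1
  have heq : x * star x * star (x * star x * m) * x
      = x * star x * m * (x * star x) * x := by
    simp only [star_mul, star_star, hm.star_eq]
    noncomm_ring
  rwa [heq] at h

/-- If `x x* ∈ K` and `v ∈ eA`, then `x (star v) ∈ K` for a closed ideal `K` of `eAe`. -/
lemma L1 (he₁ : IsSelfAdjoint e) {K : Set A}
    (hK : IsClosedIdealOf K (Set.range (fun a => e * a * e))) {x v : A}
    (hx : e * x = x) (hv : e * v = v) (hk : x * star x ∈ K) :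
    x * star v ∈ K := by
  obtain ⟨hKc, hKs, hK0, hKa, hKn, hKsm, hKi⟩ := hK
  rw [← hKc.closure_eq, Metric.mem_closure_iff]
  intro ε hε
  have hc1 : (0:ℝ) < ε / (‖star v‖ + 1) := by positivity
  obtain ⟨m, hm, hnorm⟩ := TRO.cstar_approx x hc1
  have hxvB : x * star v ∈ Set.range (fun a => e * a * e) := memB' he₁ hx hv
  refine ⟨x * star x * m * (x * star x) * (x * star v), ?_, ?_⟩
  · have hb1 : x * star x * m * e ∈ Set.range (fun a => e * a * e) := by
      refine ⟨x * star x * m, ?_⟩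
      show e * (x * star x * m) * e = x * star x * m * e
      calc e * (x * star x * m) * e = e * x * star x * m * e := by noncomm_ring
        _ = x * star x * m * e := by rw [hx]
    have hk2 : x * star x * (x * star v) ∈ K := (hKi (x * star v) hxvB _ hk).2
    have h := (hKi (x * star x * m * e) hb1 _ hk2).1
    have heq : x * star x * m * e * (x * star x * (x * star v))
        = x * star x * m * (x * star x) * (x * star v) := by
      calc x * star x * m * e * (x * star x * (x * star v))
          = x * star x * m * (e * x) * (star x * (x * star v)) := by noncomm_ring
        _ = x * star x * m * x * (star x * (x * star v)) := by rw [hx]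
        _ = x * star x * m * (x * star x) * (x * star v) := by noncomm_ring
    rwa [heq] at h
  · rw [dist_eq_norm]
    have heq : x * star v - x * star x * m * (x * star x) * (x * star v)
        = (x - x * star x * m * (x * star x) * x) * star v := by noncomm_ring
    rw [heq]
    calc ‖(x - x * star x * m * (x * star x) * x) * star v‖
        ≤ ‖x - x * star x * m * (x * star x) * x‖ * ‖star v‖ := norm_mul_le _ _
      _ < ε := by
        have h1 := (lt_div_iff₀ (by positivity : (0:ℝ) < ‖star v‖ + 1)).mp hnorm
        nlinarith [norm_nonneg (star v),
          norm_nonneg (x - x * star x * m * (x * star x) * x)]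

/-- If `x x* ∈ K` and `c ∈ eA`, then `c (star x) ∈ K` for a closed ideal `K` of `eAe`. -/
lemma L2 (he₁ : IsSelfAdjoint e) {K : Set A}
    (hK : IsClosedIdealOf K (Set.range (fun a => e * a * e))) {x c : A}
    (hx : e * x = x) (hc : e * c = c) (hk : x * star x ∈ K) :
    c * star x ∈ K := by
  obtain ⟨hKc, hKs, hK0, hKa, hKn, hKsm, hKi⟩ := hK
  rw [← hKc.closure_eq, Metric.mem_closure_iff]
  intro ε hε
  have hc1 : (0:ℝ) < ε / (‖c‖ + 1) := by positivity
  obtain ⟨m, hm, hnorm⟩ := TRO.cstar_approx x hc1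
  refine ⟨c * star x * (x * star x * m * (x * star x)), ?_, ?_⟩
  · have hb2 : c * star x * (x * star x) * m * e ∈ Set.range (fun a => e * a * e) := by
      refine ⟨c * star x * (x * star x) * m, ?_⟩
      show e * (c * star x * (x * star x) * m) * e
          = c * star x * (x * star x) * m * e
      calc e * (c * star x * (x * star x) * m) * e
          = e * c * (star x * (x * star x) * m) * e := by noncomm_ring
        _ = c * (star x * (x * star x) * m) * e := by rw [hc]
        _ = c * star x * (x * star x) * m * e := by noncomm_ring
    have h := (hKi (c * star x * (x * star x) * m * e) hb2 _ hk).1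
    have heq : c * star x * (x * star x) * m * e * (x * star x)
        = c * star x * (x * star x * m * (x * star x)) := by
      calc c * star x * (x * star x) * m * e * (x * star x)
          = c * star x * (x * star x) * m * (e * x) * star x := by noncomm_ring
        _ = c * star x * (x * star x) * m * x * star x := by rw [hx]
        _ = c * star x * (x * star x * m * (x * star x)) := by noncomm_ring
    rwa [heq] at h
  · rw [dist_eq_norm]
    have hst : star (x * star x * m * (x * star x) * x)
        = star x * (x * star x * m * (x * star x)) := by
      simp only [star_mul, star_star, hm.star_eq]
      noncomm_ring
    have heq : c * star x - c * star x * (x * star x * m * (x * star x))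
        = c * star (x - x * star x * m * (x * star x) * x) := by
      rw [star_sub, hst]
      noncomm_ring
    rw [heq]
    calc ‖c * star (x - x * star x * m * (x * star x) * x)‖
        ≤ ‖c‖ * ‖star (x - x * star x * m * (x * star x) * x)‖ := norm_mul_le _ _
      _ = ‖c‖ * ‖x - x * star x * m * (x * star x) * x‖ := by rw [norm_star]
      _ < ε := by
        have h1 := (lt_div_iff₀ (by positivity : (0:ℝ) < ‖c‖ + 1)).mp hnorm
        nlinarith [norm_nonneg c,
          norm_nonneg (x - x * star x * m * (x * star x) * x)]

/-- `I ∩ B` is a closed ideal of `B = eAe` when `I` is a TRO ideal of `eA`. -/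
lemma inter_isClosedIdeal (he₁ : IsSelfAdjoint e) (he₂ : e * e = e) {I : Set A}
    (hI : IsTROIdealOf I (Set.range (fun a => e * a))) :
    IsClosedIdealOf (I ∩ Set.range (fun a => e * a * e))
      (Set.range (fun a => e * a * e)) := by
  obtain ⟨hIc, hIs, hI0, hIa, hIn, hIsm, hItro⟩ := hI
  refine ⟨hIc.inter (B_isClosed he₂), Set.inter_subset_right, ⟨hI0, ⟨0, by simp⟩⟩,
    ?_, ?_, ?_, ?_⟩
  · rintro x ⟨hxI, a, ha⟩ y ⟨hyI, b, hb⟩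
    have ha' : e * a * e = x := ha
    have hb' : e * b * e = y := hb
    exact ⟨hIa x hxI y hyI,
      ⟨a + b, show e * (a + b) * e = x + y by rw [mul_add, add_mul, ha', hb']⟩⟩
  · rintro x ⟨hxI, a, ha⟩
    have ha' : e * a * e = x := ha
    exact ⟨hIn x hxI, ⟨-a, show e * (-a) * e = -x by rw [mul_neg, neg_mul, ha']⟩⟩
  · rintro c x ⟨hxI, a, ha⟩
    have ha' : e * a * e = x := ha
    exact ⟨hIsm c x hxI, ⟨c • a, show e * (c • a) * e = c • x
      by rw [mul_smul_comm, smul_mul_assoc, ha']⟩⟩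
  · rintro b hb x ⟨hxI, hxB⟩
    have heb : e * b = b := eB he₂ hb
    have hbe : b * e = b := Be he₂ hb
    have hex : e * x = x := eB he₂ hxB
    have hxe : x * e = x := Be he₂ hxB
    constructor
    · constructor
      · -- b * x ∈ I
        have h := (hItro x hxI b (memT heb) e (memT he₂)).2.2
        have heq : b * star e * x = b * x := by
          rw [he₁.star_eq, hbe]
        rwa [heq] at h
      · -- b * x ∈ B
        refine ⟨b * x, ?_⟩
        show e * (b * x) * e = b * x
        rw [← mul_assoc, heb, mul_assoc, hxe]
    · constructor
      · -- x * b ∈ I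
        have hsb : e * star b = star b := by
          have h := congrArg star hbe
          rwa [star_mul, he₁.star_eq] at h
        have h := (hItro x hxI (star b) (memT hsb) e (memT he₂)).1
        have heq : x * star (star b) * e = x * b := by
          rw [star_star, mul_assoc, hbe]
        rwa [heq] at h
      · refine ⟨x * b, ?_⟩
        show e * (x * b) * e = x * b
        rw [← mul_assoc, hex, mul_assoc, hbe]

/-- Candidate inverse-image ideal: `{x ∈ eA | x x* ∈ K}` is a TRO ideal. -/
lemma preimage_isTROIdeal (he₁ : IsSelfAdjoint e) (he₂ : e * e = e) {K : Set A}
    (hK : IsClosedIdealOf K (Set.range (fun a => e * a * e))) :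
    IsTROIdealOf {x : A | e * x = x ∧ x * star x ∈ K}
      (Set.range (fun a => e * a)) := by
  obtain ⟨hKc, hKs, hK0, hKa, hKn, hKsm, hKi⟩ := hK
  have hK' : IsClosedIdealOf K (Set.range (fun a => e * a * e)) :=
    ⟨hKc, hKs, hK0, hKa, hKn, hKsm, hKi⟩
  refine ⟨?_, ?_, ?_, ?_, ?_, ?_, ?_⟩
  · -- closed
    have h1 : IsClosed {x : A | e * x = x} := isClosed_eq (by fun_prop) continuous_id
    have h2 : IsClosed ((fun x : A => x * star x) ⁻¹' K) :=
      hKc.preimage (continuous_id.mul continuous_star)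
    exact h1.inter h2
  · intro x hx
    exact memT hx.1
  · exact ⟨by simp, by simpa using hK0⟩
  · rintro x ⟨hx1, hx2⟩ y ⟨hy1, hy2⟩
    refine ⟨by rw [mul_add, hx1, hy1], ?_⟩
    have heq : (x + y) * star (x + y)
        = x * star x + (x * star y + (y * star x + y * star y)) := by
      rw [star_add]
      noncomm_ring
    rw [heq]
    refine hKa _ hx2 _ (hKa _ (L1 he₁ hK' hx1 hy1 hx2) _
      (hKa _ (L2 he₁ hK' hx1 hy1 hx2) _ hy2))
  · rintro x ⟨hx1, hx2⟩
    refine ⟨by rw [mul_neg, hx1], ?_⟩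
    have heq : (-x) * star (-x) = x * star x := by
      rw [star_neg, neg_mul, mul_neg, neg_neg]
    rw [heq]
    exact hx2
  · rintro c x ⟨hx1, hx2⟩
    refine ⟨by rw [mul_smul_comm, hx1], ?_⟩
    have heq : (c • x) * star (c • x) = c • (star c • (x * star x)) := by
      rw [star_smul, smul_mul_assoc, mul_smul_comm]
    rw [heq]
    exact hKsm c _ (hKsm (star c) _ hx2)
  · rintro x ⟨hx1, hx2⟩ y hy z hz
    have hy1 : e * y = y := eT he₂ hy
    have hz1 : e * z = z := eT he₂ hz
    have hsx : star x * e = star x := star_mul_e he₁ hx1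
    refine ⟨?_, ?_, ?_⟩
    · -- x * star y * z ∈ I
      refine ⟨by rw [← mul_assoc, ← mul_assoc, hx1], ?_⟩
      -- (x y* z)(x y* z)* = x * star v with v = x y* z z* y
      have hv : e * (x * star y * z * star z * y) = x * star y * z * star z * y := by
        rw [← mul_assoc, ← mul_assoc, ← mul_assoc, ← mul_assoc, hx1]
      have heq : (x * star y * z) * star (x * star y * z)
          = x * star (x * star y * z * star z * y) := by
        simp only [star_mul, star_star]
        noncomm_ring
      rw [heq]
      exact L1 he₁ hK' hx1 hv hx2
    · -- y * star x * z ∈ I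
      have hyx : y * star x ∈ K := L2 he₁ hK' hx1 hy1 hx2
      refine ⟨by rw [← mul_assoc, ← mul_assoc, hy1], ?_⟩
      have hb3 : z * star z * x * star y ∈ Set.range (fun a => e * a * e) := by
        have hp : e * (z * star z * x) = z * star z * x := by
          rw [← mul_assoc, ← mul_assoc, hz1]
        exact memB' he₁ hp hy1
      have h := (hKi (z * star z * x * star y) hb3 (y * star x) hyx).2
      have heq : (y * star x * z) * star (y * star x * z)
          = y * star x * (z * star z * x * star y) := by
        simp only [star_mul, star_star]
        noncomm_ring
      rw [heq]
      exact h
    · -- y * star z * x ∈ I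
      refine ⟨by rw [← mul_assoc, ← mul_assoc, hy1], ?_⟩
      have hb4 : y * star z ∈ Set.range (fun a => e * a * e) := memB' he₁ hy1 hz1
      have hb4' : star (y * star z) ∈ Set.range (fun a => e * a * e) :=
        B_star he₁ hb4
      have h1 : y * star z * (x * star x) ∈ K := (hKi (y * star z) hb4 _ hx2).1
      have h2 : y * star z * (x * star x) * star (y * star z) ∈ K :=
        (hKi (star (y * star z)) hb4' _ h1).2
      have heq : (y * star z * x) * star (y * star z * x)
          = y * star z * (x * star x) * star (y * star z) := by
        simp only [star_mul, star_star]
        noncomm_ring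
      rw [heq]
      exact h2

/-- The image of the candidate ideal is `K`. -/
lemma preimage_image_eq (he₁ : IsSelfAdjoint e) (he₂ : e * e = e) {K : Set A}
    (hK : IsClosedIdealOf K (Set.range (fun a => e * a * e))) :
    (fun x => x * e) '' {x : A | e * x = x ∧ x * star x ∈ K} = K := by
  obtain ⟨hKc, hKs, hK0, hKa, hKn, hKsm, hKi⟩ := hK
  have hK' : IsClosedIdealOf K (Set.range (fun a => e * a * e)) :=
    ⟨hKc, hKs, hK0, hKa, hKn, hKsm, hKi⟩
  rw [image_eq he₁ he₂ (preimage_isTROIdeal he₁ he₂ hK')]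
  ext z
  constructor
  · rintro ⟨⟨hz1, hz2⟩, hzB⟩
    have h := L1 he₁ hK' hz1 (by rw [he₂] : e * e = e) hz2
    have heq : z * star e = z := by rw [he₁.star_eq, Be he₂ hzB]
    rwa [heq] at h
  · intro hz
    have hzB := hKs hz
    have hez : e * z = z := eB he₂ hzB
    refine ⟨⟨hez, ?_⟩, hzB⟩
    exact (hKi (star z) (B_star he₁ hzB) z hz).2

end TRO

/-- For a projection `e` in a C*-algebra `A`, the map `I ↦ Ie` is a bijective
correspondence between the closed ideals of the TRO `eA` and the closed two-sided
ideals of the C*-algebra `eAe`. -/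
theorem bijOn_ideals_eA_eAe {A : Type*} [CStarAlgebra A]
    (e : A) (he₁ : IsSelfAdjoint e) (he₂ : e * e = e) :
    Set.BijOn (fun I : Set A => (fun x => x * e) '' I)
      {I : Set A | IsTROIdealOf I (Set.range (fun a => e * a))}
      {K : Set A | IsClosedIdealOf K (Set.range (fun a => e * a * e))} := by
  have key : ∀ J₁ J₂ : Set A, IsTROIdealOf J₁ (Set.range (fun a => e * a)) →
      IsTROIdealOf J₂ (Set.range (fun a => e * a)) →
      (fun x => x * e) '' J₁ = (fun x => x * e) '' J₂ → J₁ ⊆ J₂ := by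
    intro J₁ J₂ hJ₁ hJ₂ himg x hx
    have hxT : e * x = x := TRO.eT he₂ (hJ₁.2.1 hx)
    have hk1 : x * star x ∈ (fun x => x * e) '' J₁ := by
      rw [TRO.image_eq he₁ he₂ hJ₁]
      constructor
      · have h := (hJ₁.2.2.2.2.2.2 x hx x (TRO.memT hxT) e (TRO.memT he₂)).1
        have heq : x * star x * e = x * star x := by
          rw [mul_assoc, TRO.star_mul_e he₁ hxT]
        rwa [heq] at h
      · exact TRO.memB' he₁ hxT hxT
    rw [himg, TRO.image_eq he₁ he₂ hJ₂] at hk1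
    exact TRO.recover he₂ hJ₂ hxT hk1.1
  refine ⟨?_, ?_, ?_⟩
  · -- MapsTo
    intro I hI
    show IsClosedIdealOf ((fun x => x * e) '' I) (Set.range (fun a => e * a * e))
    rw [TRO.image_eq he₁ he₂ hI]
    exact TRO.inter_isClosedIdeal he₁ he₂ hI
  · -- InjOn
    intro I₁ h₁ I₂ h₂ himg
    exact subset_antisymm (key I₁ I₂ h₁ h₂ himg) (key I₂ I₁ h₂ h₁ himg.symm)
  · -- SurjOn
    intro K hK
    exact ⟨{x : A | e * x = x ∧ x * star x ∈ K},
      TRO.preimage_isTROIdeal he₁ he₂ hK, TRO.preimage_image_eq he₁ he₂ hK⟩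
end

section
/- Let $e$ and $f$ be projections in a $C^*$-algebra $A$, and let $I$ be a closed ideal of the TRO $eAf$ (i.e., a closed subspace with $(eAf)I^*(eAf) \subseteq I$). Then $I = e\langle I\rangle f = \langle I \rangle \cap eAf$, where $\langle I\rangle$ is the closed two-sided ideal of $A$ generated by $I$. -/
/-- The smallest norm-closed two-sided ideal of `A` containing `S`. -/
def closedIdealGen {A : Type*} [CStarAlgebra A] (S : Set A) : Set A :=
  ⋂₀ {I : Set A | IsClosedTwoSidedIdeal I ∧ S ⊆ I}

lemma key_ineq {s : ℝ} (h0 : 0 ≤ s) (h1 : s ≤ 1) (k : ℕ) :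
    s ^ k * (1 - s) ≤ 1 / (k + 1) := by
  have hgs : (∑ j ∈ Finset.range (k+1), s ^ j) * (s - 1) = s ^ (k+1) - 1 :=
    geom_sum_mul s (k+1)
  have hlow : (k+1 : ℝ) * s ^ k ≤ ∑ j ∈ Finset.range (k+1), s ^ j := by
    have hmono : ∀ j ∈ Finset.range (k+1), s ^ k ≤ s ^ j := fun j hj =>
      pow_le_pow_of_le_one h0 h1 (Nat.le_of_lt_succ (Finset.mem_range.mp hj))
    calc (k+1:ℝ) * s ^ k = ∑ _j ∈ Finset.range (k+1), s ^ k := by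
          rw [Finset.sum_const, Finset.card_range, nsmul_eq_mul]; push_cast; ring
      _ ≤ _ := Finset.sum_le_sum hmono
  have h3 := mul_le_mul_of_nonneg_right hlow (by linarith : (0:ℝ) ≤ 1 - s)
  have h4 : (∑ j ∈ Finset.range (k+1), s ^ j) * (1 - s) = 1 - s ^ (k+1) := by
    linear_combination -hgs
  rw [h4] at h3
  have hkpos : (0:ℝ) < (k:ℝ) + 1 := by positivity
  rw [le_div_iff₀ hkpos]
  have h5 : (0:ℝ) ≤ s ^ (k+1) := pow_nonneg h0 (k+1)
  nlinarith

lemma exists_approx {A : Type*} [CStarAlgebra A] (b : A) (hbsa : IsSelfAdjoint b)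
    (hspec : ∀ t ∈ spectrum ℝ b, 0 ≤ t) (n : ℕ) :
    ∃ d ρ : A, d * b = 1 - ρ ∧ b * d = 1 - ρ ∧ IsSelfAdjoint ρ ∧
      ‖ρ * b * ρ‖ ≤ (‖b‖ + 1) / (2 * (n:ℝ) + 1) := by
  obtain hA|hA := subsingleton_or_nontrivial A
  · refine ⟨0, 0, Subsingleton.elim _ _, Subsingleton.elim _ _, by
      simpa using isSelfAdjoint_zero A, ?_⟩
    have h0 : (0:A) * b * 0 = 0 := by simp
    rw [h0, norm_zero]
    positivity
  set M : ℝ := ‖b‖ + 1 with hM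
  have hM0 : (0:ℝ) < M := by rw [hM]; positivity
  have hcd : Continuous (fun t : ℝ => (∑ j ∈ Finset.range n, (1 - t/M)^j)/M) := by fun_prop
  have hcρ : Continuous (fun t : ℝ => (1 - t/M)^n) := by fun_prop
  have hid : cfc (fun t : ℝ => t) b = b := cfc_id' ℝ b hbsa
  refine ⟨cfc (fun t : ℝ => (∑ j ∈ Finset.range n, (1 - t/M)^j)/M) b,
          cfc (fun t : ℝ => (1 - t/M)^n) b, ?_, ?_, ?_, ?_⟩
  · have h1 : cfc (fun t : ℝ => ((∑ j ∈ Finset.range n, (1 - t/M)^j)/M) * t) b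
        = cfc (fun t : ℝ => (∑ j ∈ Finset.range n, (1 - t/M)^j)/M) b * b := by
      rw [cfc_mul _ _ b hcd.continuousOn continuous_id'.continuousOn, hid]
    rw [← h1]
    have h2 : (fun t : ℝ => ((∑ j ∈ Finset.range n, (1 - t/M)^j)/M) * t)
        = fun t : ℝ => 1 - (1 - t/M)^n := by
      funext t
      have hgs := geom_sum_mul (1 - t/M) n
      have hMne : M ≠ 0 := ne_of_gt hM0
      linear_combination -hgs
    rw [h2, cfc_sub (fun _ : ℝ => (1:ℝ)) (fun t : ℝ => (1 - t/M)^n) b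
        continuous_const.continuousOn hcρ.continuousOn, cfc_const 1 b hbsa, map_one]
  · have h1 : cfc (fun t : ℝ => t * ((∑ j ∈ Finset.range n, (1 - t/M)^j)/M)) b
        = b * cfc (fun t : ℝ => (∑ j ∈ Finset.range n, (1 - t/M)^j)/M) b := by
      rw [cfc_mul _ _ b continuous_id'.continuousOn hcd.continuousOn, hid]
    rw [← h1]
    have h2 : (fun t : ℝ => t * ((∑ j ∈ Finset.range n, (1 - t/M)^j)/M))
        = fun t : ℝ => 1 - (1 - t/M)^n := by
      funext t
      have hgs := geom_sum_mul (1 - t/M) n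
      have hMne : M ≠ 0 := ne_of_gt hM0
      linear_combination -hgs
    rw [h2, cfc_sub (fun _ : ℝ => (1:ℝ)) (fun t : ℝ => (1 - t/M)^n) b
        continuous_const.continuousOn hcρ.continuousOn, cfc_const 1 b hbsa, map_one]
  · exact cfc_predicate _ b
  · have h4 : cfc (fun t : ℝ => (1 - t/M)^n * t * (1 - t/M)^n) b
        = cfc (fun t : ℝ => (1 - t/M)^n) b * b * cfc (fun t : ℝ => (1 - t/M)^n) b := by
      rw [cfc_mul (fun t : ℝ => (1 - t/M)^n * t) (fun t : ℝ => (1 - t/M)^n) b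
          (by fun_prop) hcρ.continuousOn,
        cfc_mul (fun t : ℝ => (1 - t/M)^n) (fun t : ℝ => t) b hcρ.continuousOn
          continuous_id'.continuousOn, hid]
    rw [← h4]
    refine norm_cfc_le (div_nonneg hM0.le (by positivity)) fun t ht => ?_
    have ht0 : 0 ≤ t := hspec t ht
    have htM : t ≤ ‖b‖ := by
      have h := spectrum.norm_le_norm_of_mem ht
      rwa [Real.norm_eq_abs, abs_of_nonneg ht0] at h
    have htM' : t ≤ M := by rw [hM]; linarith
    have hs0 : 0 ≤ 1 - t/M := by
      have : t/M ≤ 1 := (div_le_one hM0).mpr htM'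
      linarith
    have hs1 : 1 - t/M ≤ 1 := by
      have : 0 ≤ t/M := div_nonneg ht0 hM0.le
      linarith
    have hk := key_ineq hs0 hs1 (2*n)
    rw [Real.norm_eq_abs, abs_of_nonneg
      (mul_nonneg (mul_nonneg (pow_nonneg hs0 n) ht0) (pow_nonneg hs0 n))]
    have hMne : M ≠ 0 := ne_of_gt hM0
    calc (1 - t/M)^n * t * (1 - t/M)^n
        = M * ((1 - t/M)^(2*n) * (1 - (1 - t/M))) := by field_simp; ring
      _ ≤ M * (1/((2*n : ℕ) + 1)) := mul_le_mul_of_nonneg_left hk hM0.le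
      _ ≤ M / (2 * (n:ℝ) + 1) := by push_cast; rw [mul_one_div]

section absorb
variable {A : Type*} [CStarAlgebra A] {e f : A}

lemma mem_T {z : A} (h1 : e * z = z) (h2 : z * f = z) :
    z ∈ Set.range (fun a => e * a * f) := ⟨z, by show e * z * f = z; rw [h1, h2]⟩

lemma numeric_step {u r : A} {M ε : ℝ} {n : ℕ} (hM1 : 1 ≤ M) (hε : 0 < ε)
    (hn : (‖u‖ + 1)^2 * M / ε^2 < (n:ℝ)) (hr : ‖r‖ * ‖r‖ ≤ M / (2 * (n:ℝ) + 1)) :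
    ‖u‖ * ‖r‖ < ε := by
  have hu0 : (0:ℝ) ≤ ‖u‖ := norm_nonneg u
  have hr0 : (0:ℝ) ≤ ‖r‖ := norm_nonneg r
  have hn1 : (0:ℝ) < 2 * (n:ℝ) + 1 := by positivity
  have hεsq : (0:ℝ) < ε^2 := by positivity
  have hstep : (‖u‖ + 1)^2 * M < ε^2 * (2 * (n:ℝ) + 1) := by
    have h := (div_lt_iff₀ hεsq).mp hn
    nlinarith [sq_nonneg (‖u‖ + 1)]
  have hsq : (‖u‖ * ‖r‖)^2 < ε^2 := by
    have h1 : (‖u‖ * ‖r‖)^2 ≤ (‖u‖+1)^2 * (‖r‖ * ‖r‖) := by nlinarith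
    have h2 : (‖u‖+1)^2 * (‖r‖ * ‖r‖) ≤ (‖u‖+1)^2 * (M / (2*(n:ℝ)+1)) :=
      mul_le_mul_of_nonneg_left hr (by positivity)
    have h3 : (‖u‖+1)^2 * (M / (2*(n:ℝ)+1)) < ε^2 := by
      rw [mul_div_assoc', div_lt_iff₀ hn1]
      linarith
    linarith
  calc ‖u‖ * ‖r‖ = |‖u‖ * ‖r‖| := (abs_of_nonneg (by positivity)).symm
    _ < ε := abs_lt_of_sq_lt_sq' (by simpa [sq] using hsq) hε.le |>.2

lemma absorb_left (he₂ : e * e = e) (hf₂ : f * f = f)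
    {I : Set A} (hI : IsTROIdealOf I (Set.range (fun a => e * a * f)))
    {u x : A} (hu : e * u = u) (hx : x ∈ I) : u * x ∈ I := by
  obtain ⟨hIc, hIT, h0, hadd, hneg, hsmul, hTRO⟩ := hI
  have hex : e * x = x := by
    obtain ⟨a, ha⟩ := hIT hx
    simp only at ha
    rw [← ha]; simp only [← mul_assoc]; rw [he₂]
  have hxf : x * f = x := by
    obtain ⟨a, ha⟩ := hIT hx
    simp only at ha
    rw [← ha]; simp only [mul_assoc]; rw [hf₂]
  have hbsa : IsSelfAdjoint (x * star x) := by
    rw [IsSelfAdjoint, star_mul, star_star]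
  have hspec : ∀ t ∈ spectrum ℝ (x * star x), 0 ≤ t := by
    have := spectrum_star_mul_self_nonneg (b := star x) (A := A)
    rwa [star_star] at this
  rw [← hIc.closure_eq, Metric.mem_closure_iff]
  intro ε hε
  obtain ⟨n, hn⟩ := exists_nat_gt ((‖u‖+1)^2 * (‖x * star x‖ + 1) / ε^2)
  obtain ⟨d, ρ, hdb, hbd, hρsa, hρnorm⟩ := exists_approx (x * star x) hbsa hspec n
  refine ⟨(u * d * x) * star x * x, ?_, ?_⟩
  · have hyT : u * d * x ∈ Set.range (fun a => e * a * f) := by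
      refine mem_T ?_ ?_
      · simp only [← mul_assoc]; rw [hu]
      · simp only [mul_assoc]; rw [hxf]
    exact (hTRO x hx (u * d * x) hyT x (hIT hx)).2.1
  · have helt : (u * d * x) * star x * x = u * x - u * (ρ * x) := by
      have h1 : (u * d * x) * star x * x = u * (d * (x * star x)) * x := by
        simp only [mul_assoc]
      rw [h1, hdb]
      noncomm_ring
    rw [helt, dist_eq_norm]
    have h2 : u * x - (u * x - u * (ρ * x)) = u * (ρ * x) := by abel
    rw [h2]
    have h5 : ‖ρ * x‖ * ‖ρ * x‖ ≤ (‖x * star x‖ + 1) / (2 * (n:ℝ) + 1) := by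
      rw [← CStarRing.norm_self_mul_star]
      have h6 : (ρ * x) * star (ρ * x) = ρ * (x * star x) * ρ := by
        rw [star_mul, hρsa.star_eq]; simp only [mul_assoc]
      rw [h6]; exact hρnorm
    calc ‖u * (ρ * x)‖ ≤ ‖u‖ * ‖ρ * x‖ := norm_mul_le _ _
      _ < ε := numeric_step (by linarith [norm_nonneg (x * star x)]) hε hn h5

lemma absorb_right (he₂ : e * e = e) (hf₂ : f * f = f)
    {I : Set A} (hI : IsTROIdealOf I (Set.range (fun a => e * a * f)))
    {v x : A} (hv : v * f = v) (hx : x ∈ I) : x * v ∈ I := by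
  obtain ⟨hIc, hIT, h0, hadd, hneg, hsmul, hTRO⟩ := hI
  have hex : e * x = x := by
    obtain ⟨a, ha⟩ := hIT hx
    simp only at ha
    rw [← ha]; simp only [← mul_assoc]; rw [he₂]
  have hxf : x * f = x := by
    obtain ⟨a, ha⟩ := hIT hx
    simp only at ha
    rw [← ha]; simp only [mul_assoc]; rw [hf₂]
  have hbsa : IsSelfAdjoint (star x * x) := by
    rw [IsSelfAdjoint, star_mul, star_star]
  have hspec : ∀ t ∈ spectrum ℝ (star x * x), 0 ≤ t :=
    spectrum_star_mul_self_nonneg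
  rw [← hIc.closure_eq, Metric.mem_closure_iff]
  intro ε hε
  obtain ⟨n, hn⟩ := exists_nat_gt ((‖v‖+1)^2 * (‖star x * x‖ + 1) / ε^2)
  obtain ⟨d, ρ, hdb, hbd, hρsa, hρnorm⟩ := exists_approx (star x * x) hbsa hspec n
  refine ⟨x * star x * (x * d * v), ?_, ?_⟩
  · have hzT : x * d * v ∈ Set.range (fun a => e * a * f) := by
      refine mem_T ?_ ?_
      · simp only [← mul_assoc]; rw [hex]
      · simp only [mul_assoc]; rw [hv]
    exact (hTRO x hx x (hIT hx) (x * d * v) hzT).1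
  · have helt : x * star x * (x * d * v) = x * v - (x * ρ) * v := by
      have h1 : x * star x * (x * d * v) = x * ((star x * x) * d) * v := by
        simp only [mul_assoc]
      rw [h1, hbd]
      noncomm_ring
    rw [helt, dist_eq_norm]
    have h2 : x * v - (x * v - (x * ρ) * v) = (x * ρ) * v := by abel
    rw [h2]
    have h5 : ‖x * ρ‖ * ‖x * ρ‖ ≤ (‖star x * x‖ + 1) / (2 * (n:ℝ) + 1) := by
      rw [← CStarRing.norm_star_mul_self]
      have h6 : star (x * ρ) * (x * ρ) = ρ * (star x * x) * ρ := by
        rw [star_mul, hρsa.star_eq]; simp only [mul_assoc]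
      rw [h6]; exact hρnorm
    calc ‖(x * ρ) * v‖ ≤ ‖x * ρ‖ * ‖v‖ := norm_mul_le _ _
      _ = ‖v‖ * ‖x * ρ‖ := mul_comm _ _
      _ < ε := numeric_step (by linarith [norm_nonneg (star x * x)]) hε hn h5

end absorb

/-- If `e` and `f` are projections in a C*-algebra `A` and `I` is a closed ideal of the
TRO `eAf`, then `I = e⟨I⟩f = ⟨I⟩ ∩ eAf`, where `⟨I⟩` is the closed two-sided ideal of
`A` generated by `I`. -/
theorem troIdeal_eq_corner_of_idealGen {A : Type*} [CStarAlgebra A]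
    (e f : A) (he₁ : IsSelfAdjoint e) (he₂ : e * e = e)
    (hf₁ : IsSelfAdjoint f) (hf₂ : f * f = f)
    (I : Set A) (hI : IsTROIdealOf I (Set.range (fun a => e * a * f))) :
    I = (fun x => e * x * f) '' closedIdealGen I ∧
    I = closedIdealGen I ∩ Set.range (fun a => e * a * f) := by
  obtain ⟨hIc, hIT, h0, hadd, hneg, hsmul, hTRO⟩ := hI
  have hI' : IsTROIdealOf I (Set.range (fun a => e * a * f)) :=
    ⟨hIc, hIT, h0, hadd, hneg, hsmul, hTRO⟩
  -- the fixed-point characterization of membership in T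
  have hfix : ∀ z ∈ Set.range (fun a => e * a * f), e * z * f = z := by
    rintro z ⟨a, rfl⟩
    show e * (e * a * f) * f = e * a * f
    simp only [← mul_assoc]; rw [he₂]
    simp only [mul_assoc]; rw [hf₂]
  -- the auxiliary ideal K
  set K : Set A := {y : A | ∀ a b : A, e * (a * y * b) * f ∈ I} with hK
  have hKideal : IsClosedTwoSidedIdeal K := by
    refine ⟨?_, ?_, ?_, ?_, ?_, ?_⟩
    · have hKeq : K = ⋂ (a : A), ⋂ (b : A), (fun y => e * (a * y * b) * f) ⁻¹' I := by
        ext y; simp [hK, Set.mem_iInter]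
      rw [hKeq]
      exact isClosed_iInter fun a => isClosed_iInter fun b =>
        hIc.preimage (by fun_prop)
    · intro a b; simpa using h0
    · intro y hy z hz a b
      have h1 : e * (a * (y + z) * b) * f = e * (a * y * b) * f + e * (a * z * b) * f := by
        noncomm_ring
      rw [h1]; exact hadd _ (hy a b) _ (hz a b)
    · intro y hy a b
      have h1 : e * (a * (-y) * b) * f = -(e * (a * y * b) * f) := by noncomm_ring
      rw [h1]; exact hneg _ (hy a b)
    · intro c y hy a b
      have h1 : e * (a * (c • y) * b) * f = c • (e * (a * y * b) * f) := by
        simp only [mul_smul_comm, smul_mul_assoc]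
      rw [h1]; exact hsmul c _ (hy a b)
    · intro w y hy
      constructor
      · intro a b
        have h1 : e * (a * (w * y) * b) * f = e * ((a * w) * y * b) * f := by
          noncomm_ring
        rw [h1]; exact hy (a * w) b
      · intro a b
        have h1 : e * (a * (y * w) * b) * f = e * (a * y * (w * b)) * f := by
          noncomm_ring
        rw [h1]; exact hy a (w * b)
  have hIK : I ⊆ K := by
    intro x hx a b
    have hex : e * x = x := by
      obtain ⟨a', ha'⟩ := hIT hx
      simp only at ha'
      rw [← ha']; simp only [← mul_assoc]; rw [he₂]
    have hxf : x * f = x := by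
      obtain ⟨a', ha'⟩ := hIT hx
      simp only at ha'
      rw [← ha']; simp only [mul_assoc]; rw [hf₂]
    have h1 : x * (f * b * f) ∈ I :=
      absorb_right he₂ hf₂ hI' (by simp only [mul_assoc]; rw [hf₂]) hx
    have h2 : (e * a * e) * (x * (f * b * f)) ∈ I :=
      absorb_left he₂ hf₂ hI' (by simp only [← mul_assoc]; rw [he₂]) h1
    have heq : (e * a * e) * (x * (f * b * f)) = e * (a * x * b) * f := by
      simp only [← mul_assoc]
      rw [mul_assoc (e * a) e x, hex, mul_assoc (e * a) x f, hxf]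
    rwa [heq] at h2
  have hIgen : I ⊆ closedIdealGen I := fun x hx =>
    Set.mem_sInter.mpr fun J hJ => hJ.2 hx
  have hgenK : closedIdealGen I ⊆ K := fun y hy =>
    Set.mem_sInter.mp hy K ⟨hKideal, hIK⟩
  have hcorner : ∀ y ∈ closedIdealGen I, e * y * f ∈ I := by
    intro y hy
    have h := hgenK hy 1 1
    simpa using h
  constructor
  · ext z
    constructor
    · intro hz
      exact ⟨z, hIgen hz, hfix z (hIT hz)⟩
    · rintro ⟨y, hy, rfl⟩
      exact hcorner y hy
  · ext z
    constructor
    · intro hz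
      exact ⟨hIgen hz, hIT hz⟩
    · rintro ⟨hz1, hz2⟩
      rw [← hfix z hz2]
      exact hcorner z hz1
end

section
/- Let $T$ be a norm-closed subspace of a C*-algebra closed under $(x,y,z) \mapsto xy^*z$, let $E \subseteq T$ be a norm-closed subspace, and let $\mathscr{S}$ be the set of closed TRO-ideals $I$ of $T$ with $I \cap E = \{0\}$ and such that the quotient map $T \to T/I$ is isometric on $E$. Then every chain in $\mathscr{S}$ has an upper bound in $\mathscr{S}$; consequently, every element of $\mathscr{S}$ is contained in a maximal element of $\mathscr{S}$. -/
/-- A sub-TRO of a C*-algebra `A`: a norm-closed subspace closed under `(x,y,z) ↦ x y* z`. -/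
def IsSubTRO {A : Type*} [CStarAlgebra A] (T : Set A) : Prop :=
  IsClosed T ∧ (0 : A) ∈ T ∧ (∀ x ∈ T, ∀ y ∈ T, x + y ∈ T) ∧
    (∀ x ∈ T, -x ∈ T) ∧ (∀ c : ℂ, ∀ x ∈ T, c • x ∈ T) ∧
    (∀ x ∈ T, ∀ y ∈ T, ∀ z ∈ T, x * star y * z ∈ T)

/-- Let `T` be a sub-TRO of a C*-algebra, `E ⊆ T` a closed subspace, and `𝒮` the set of
closed TRO-ideals `I` of `T` with `I ∩ E = {0}` such that the quotient map `T → T/I` is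
isometric on `E`.  Every chain in `𝒮` has an upper bound in `𝒮`; consequently every
element of `𝒮` is contained in a maximal element of `𝒮`. -/
theorem exists_maximal_operator_space_ideal {A : Type*} [CStarAlgebra A]
    (T E : Set A) (hT : IsSubTRO T) (hE : E ⊆ T)
    (hEclosed : IsClosed E) (hE0 : (0 : A) ∈ E)
    (hEadd : ∀ x ∈ E, ∀ y ∈ E, x + y ∈ E) (hEneg : ∀ x ∈ E, -x ∈ E)
    (hEsmul : ∀ c : ℂ, ∀ x ∈ E, c • x ∈ E)
    (𝒮 : Set (Set A))
    (h𝒮 : 𝒮 = {I | IsTROIdealOf I T ∧ I ∩ E = {0} ∧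
      ∀ x ∈ E, ∀ z ∈ I, ‖x‖ ≤ ‖x - z‖}) :
    (∀ c ⊆ 𝒮, IsChain (· ⊆ ·) c → c.Nonempty →
        ∃ ub ∈ 𝒮, ∀ I ∈ c, I ⊆ ub) ∧
    (∀ J ∈ 𝒮, ∃ M, Maximal (· ∈ 𝒮) M ∧ J ⊆ M) := by
  subst h𝒮
  have main : ∀ c ⊆ {I | IsTROIdealOf I T ∧ I ∩ E = {0} ∧
      ∀ x ∈ E, ∀ z ∈ I, ‖x‖ ≤ ‖x - z‖}, IsChain (· ⊆ ·) c → c.Nonempty →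
      ∃ ub ∈ {I | IsTROIdealOf I T ∧ I ∩ E = {0} ∧
        ∀ x ∈ E, ∀ z ∈ I, ‖x‖ ≤ ‖x - z‖}, ∀ I ∈ c, I ⊆ ub := by
    intro c hc hchain ⟨I₀, hI₀⟩
    set U : Set A := ⋃₀ c with hU
    -- U is closed under the operations
    have hUsub : U ⊆ T := by
      rintro x ⟨I, hI, hxI⟩
      exact (hc hI).1.2.1 hxI
    have hU0 : (0 : A) ∈ U := ⟨I₀, hI₀, (hc hI₀).1.2.2.1⟩
    have hdir : ∀ {x y : A}, x ∈ U → y ∈ U →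
        ∃ I ∈ c, x ∈ I ∧ y ∈ I := by
      rintro x y ⟨I, hI, hxI⟩ ⟨J, hJ, hyJ⟩
      rcases hchain.total hI hJ with h | h
      · exact ⟨J, hJ, h hxI, hyJ⟩
      · exact ⟨I, hI, hxI, h hyJ⟩
    have hUadd : ∀ x ∈ U, ∀ y ∈ U, x + y ∈ U := by
      intro x hx y hy
      obtain ⟨I, hI, hxI, hyI⟩ := hdir hx hy
      exact ⟨I, hI, (hc hI).1.2.2.2.1 x hxI y hyI⟩
    have hUneg : ∀ x ∈ U, -x ∈ U := by
      rintro x ⟨I, hI, hxI⟩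
      exact ⟨I, hI, (hc hI).1.2.2.2.2.1 x hxI⟩
    have hUsmul : ∀ a : ℂ, ∀ x ∈ U, a • x ∈ U := by
      rintro a x ⟨I, hI, hxI⟩
      exact ⟨I, hI, (hc hI).1.2.2.2.2.2.1 a x hxI⟩
    have hUtri : ∀ x ∈ U, ∀ y ∈ T, ∀ z ∈ T,
        x * star y * z ∈ U ∧ y * star x * z ∈ U ∧ y * star z * x ∈ U := by
      rintro x ⟨I, hI, hxI⟩ y hy z hz
      obtain ⟨h1, h2, h3⟩ := (hc hI).1.2.2.2.2.2.2 x hxI y hy z hz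
      exact ⟨⟨I, hI, h1⟩, ⟨I, hI, h2⟩, ⟨I, hI, h3⟩⟩
    -- the norm condition on U
    have hUnorm : ∀ x ∈ E, ∀ z ∈ U, ‖x‖ ≤ ‖x - z‖ := by
      rintro x hx z ⟨I, hI, hzI⟩
      exact (hc hI).2.2 x hx z hzI
    refine ⟨closure U, ⟨⟨isClosed_closure, ?_, subset_closure hU0, ?_, ?_, ?_, ?_⟩, ?_, ?_⟩,
      fun I hI => (Set.subset_sUnion_of_mem hI).trans subset_closure⟩
    · exact hT.1.closure_subset_iff.mpr hUsub
    · intro x hx y hy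
      exact map_mem_closure₂ (by fun_prop) hx hy hUadd
    · intro x hx
      exact map_mem_closure (by fun_prop) hx hUneg
    · intro a x hx
      exact map_mem_closure (by fun_prop) hx (fun y hy => hUsmul a y hy)
    · intro x hx y hy z hz
      refine ⟨?_, ?_, ?_⟩
      · exact map_mem_closure (f := fun w => w * star y * z) (by fun_prop) hx
          (fun w hw => (hUtri w hw y hy z hz).1)
      · exact map_mem_closure (f := fun w => y * star w * z) (by fun_prop) hx
          (fun w hw => (hUtri w hw y hy z hz).2.1)
      · exact map_mem_closure (f := fun w => y * star z * w) (by fun_prop) hx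
          (fun w hw => (hUtri w hw y hy z hz).2.2)
    · -- closure U ∩ E = {0}
      apply Set.eq_singleton_iff_unique_mem.mpr
      constructor
      · exact ⟨subset_closure hU0, hE0⟩
      · rintro x ⟨hxU, hxE⟩
        have hle : ‖x‖ ≤ ‖x - x‖ := by
          have hcl : closure U ⊆ {z | ‖x‖ ≤ ‖x - z‖} := by
            apply closure_minimal (fun z hz => hUnorm x hxE z hz)
            exact isClosed_le continuous_const ((continuous_const.sub continuous_id).norm)
          exact hcl hxU
        simpa [sub_self] using norm_le_zero_iff.mp (by simpa using hle)
    · -- norm condition on closure U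
      intro x hx z hz
      have hcl : closure U ⊆ {w | ‖x‖ ≤ ‖x - w‖} := by
        apply closure_minimal (fun w hw => hUnorm x hx w hw)
        exact isClosed_le continuous_const ((continuous_const.sub continuous_id).norm)
      exact hcl hz
  refine ⟨main, fun J hJ => ?_⟩
  obtain ⟨M, hJM, hM⟩ := zorn_subset_nonempty _ main J hJ
  exact ⟨M, hM, hJM⟩
end

section
/- Let $W$ be a von Neumann algebra and $e \in W$ a nonzero projection with central cover $1$. If there exists a TRO isomorphism (a linear bijection $\pi: We \to eW$ with $\pi(xy^*z) = \pi(x)\pi(y)^*\pi(z)$), then $e$ is von Neumann equivalent to $1$, i.e., there exists a partial isometry $u \in W$ with $u^*u = 1$ and $uu^* = e$. -/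
section auxvne
variable {H : Type*} [NormedAddCommGroup H] [InnerProductSpace ℂ H] [CompleteSpace H]

lemma vne_proj_fix (K : Submodule ℂ H) [CompleteSpace K] {v : H} (hv : v ∈ K) :
    (K.subtypeL ∘L K.orthogonalProjectionOnto) v = v :=
  Submodule.starProjection_eq_self_iff.mpr hv

lemma vne_proj_mem (K : Submodule ℂ H) [CompleteSpace K] (v : H) :
    (K.subtypeL ∘L K.orthogonalProjectionOnto) v ∈ K :=
  (K.orthogonalProjectionOnto v).2

lemma vne_proj_orth (K : Submodule ℂ H) [CompleteSpace K] {v : H} (hv : v ∈ Kᗮ) :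
    (K.subtypeL ∘L K.orthogonalProjectionOnto) v = 0 := by
  simp [Submodule.orthogonalProjectionOnto_apply_of_mem_orthogonal hv]

lemma vne_proj_comm (K : Submodule ℂ H) [CompleteSpace K] (c : H →L[ℂ] H)
    (h1 : ∀ x ∈ K, c x ∈ K) (h2 : ∀ x ∈ K, star c x ∈ K) :
    c * (K.subtypeL ∘L K.orthogonalProjectionOnto) = (K.subtypeL ∘L K.orthogonalProjectionOnto) * c := by
  set P := K.subtypeL ∘L K.orthogonalProjectionOnto with hP
  ext ξ
  have hmem : P ξ ∈ K := vne_proj_mem K ξ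
  have horth : ξ - P ξ ∈ Kᗮ := Submodule.sub_starProjection_mem_orthogonal (K := K) ξ
  have hc2 : c (ξ - P ξ) ∈ Kᗮ := by
    rw [Submodule.mem_orthogonal]
    intro uu hu
    have : (inner ℂ uu (c (ξ - P ξ)) : ℂ) = inner ℂ ((star c) uu) (ξ - P ξ) := by
      rw [ContinuousLinearMap.star_eq_adjoint, ContinuousLinearMap.adjoint_inner_left]
    rw [this]
    exact (Submodule.mem_orthogonal K _).mp horth _ (h2 uu hu)
  have split : c ξ = c (P ξ) + c (ξ - P ξ) := by
    rw [← map_add]; congr 1; abel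
  have : P (c ξ) = c (P ξ) := by
    rw [split, map_add, vne_proj_fix K (h1 _ hmem), vne_proj_orth K hc2, add_zero]
  simp only [ContinuousLinearMap.mul_apply, this]

lemma vne_maps_closure (c : H →L[ℂ] H) (G : Set H) (h : ∀ ξ ∈ G, c ξ ∈ G) :
    ∀ x ∈ (Submodule.span ℂ G).topologicalClosure, c x ∈ (Submodule.span ℂ G).topologicalClosure := by
  set M := (Submodule.span ℂ G).topologicalClosure with hM
  have : M ≤ M.comap (c : H →ₗ[ℂ] H) := by
    apply Submodule.topologicalClosure_minimal
    · rw [Submodule.span_le]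
      intro ξ hξ
      exact Submodule.le_topologicalClosure _ (Submodule.subset_span (h ξ hξ))
    · have : (M.comap (c : H →ₗ[ℂ] H) : Set H) = (c : H → H) ⁻¹' (M : Set H) := rfl
      rw [this]
      exact ((Submodule.span ℂ G).isClosed_topologicalClosure.preimage c.continuous)
  intro x hx
  exact this hx

lemma vne_vanish_closure (T : H →L[ℂ] H) (G : Set H) (h : ∀ ξ ∈ G, T ξ = 0) :
    ∀ x ∈ (Submodule.span ℂ G).topologicalClosure, T x = 0 := by
  have : (Submodule.span ℂ G).topologicalClosure ≤ LinearMap.ker (T : H →ₗ[ℂ] H) := by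
    apply Submodule.topologicalClosure_minimal
    · rw [Submodule.span_le]; intro ξ hξ; exact h ξ hξ
    · exact ContinuousLinearMap.isClosed_ker T
  intro x hx
  exact this hx

end auxvne


/-- Let `W` be a von Neumann algebra and `e ∈ W` a nonzero projection with central
cover `1`.  If there is a TRO isomorphism `π : We → eW`, then `e` is von Neumann
equivalent to `1`: there is a partial isometry `u ∈ W` with `u*u = 1` and `uu* = e`. -/
theorem equiv_one_of_tro_iso_We_eW {H : Type*} [NormedAddCommGroup H]
    [InnerProductSpace ℂ H] [CompleteSpace H]
    (W : VonNeumannAlgebra H) (e : H →L[ℂ] H) (heW : e ∈ W)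
    (he₁ : IsSelfAdjoint e) (he₂ : e * e = e) (hne : e ≠ 0)
    -- the central cover of `e` is `1`: any central projection of `W` dominating `e`
    -- equals `1`
    (hcentral : ∀ z ∈ W, (∀ w ∈ W, z * w = w * z) → IsSelfAdjoint z → z * z = z →
      e * z = e → z = 1)
    (π : (H →L[ℂ] H) → (H →L[ℂ] H))
    (hbij : Set.BijOn π {x | ∃ w ∈ W, x = w * e} {x | ∃ w ∈ W, x = e * w})
    (hadd : ∀ x ∈ {x | ∃ w ∈ W, x = w * e}, ∀ y ∈ {x | ∃ w ∈ W, x = w * e},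
      π (x + y) = π x + π y)
    (hsmul : ∀ (c : ℂ), ∀ x ∈ {x | ∃ w ∈ W, x = w * e}, π (c • x) = c • π x)
    (htro : ∀ x ∈ {x | ∃ w ∈ W, x = w * e}, ∀ y ∈ {x | ∃ w ∈ W, x = w * e},
      ∀ z ∈ {x | ∃ w ∈ W, x = w * e},
      π (x * star y * z) = π x * star (π y) * π z) :
    ∃ u ∈ W, star u * u = 1 ∧ u * star u = e := by
  classical
  have hestar : star e = e := he₁
  have heS₁ : e ∈ {x | ∃ w ∈ W, x = w * e} := ⟨e, heW, he₂.symm⟩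
  set u : H →L[ℂ] H := π e with hu_def
  obtain ⟨w₀, hw₀, hu_eq⟩ : u ∈ {x | ∃ w ∈ W, x = e * w} := hbij.mapsTo heS₁
  have huW : u ∈ W := hu_eq ▸ mul_mem heW hw₀
  have heu : e * u = u := by rw [hu_eq, ← mul_assoc, he₂]
  -- star-closedness of the centralizer
  have hstar_cent : ∀ c ∈ Set.centralizer (W : Set (H →L[ℂ] H)),
      star c ∈ Set.centralizer (W : Set (H →L[ℂ] H)) := by
    intro c hc m hm
    have h3 := hc _ (show star m ∈ (W : Set (H →L[ℂ] H)) from star_mem hm)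
    calc m * star c = star (c * star m) := by simp
      _ = star (star m * c) := by rw [h3]
      _ = star c * m := by simp
  -- every element of eW is fixed by right multiplication with (star u * u)
  have h_right : ∀ w ∈ W, (e * w) * (star u * u) = e * w := by
    intro w hw
    obtain ⟨x, hx, hπx⟩ := hbij.surjOn (show e * w ∈ {x | ∃ w ∈ W, x = e * w} from ⟨w, hw, rfl⟩)
    have hxe : x * e = x := by
      obtain ⟨v, hv, rfl⟩ := hx
      rw [mul_assoc, he₂]
    have := htro x hx e heS₁ e heS₁
    rw [hestar, hxe, hxe] at this
    rw [← hπx, ← mul_assoc, ← this]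
  have h_left : ∀ w ∈ W, (star u * u) * (w * e) = w * e := by
    intro w hw
    have h := h_right (star w) (star_mem hw)
    calc star u * u * (w * e) = star ((e * star w) * (star u * u)) := by
          simp only [star_mul, star_star, hestar, mul_assoc]
      _ = star (e * star w) := by rw [h]
      _ = w * e := by simp only [star_mul, star_star, hestar]
  ---------------------------------------------------------------
  -- Step 1 : star u * u = 1, via the central cover hypothesis
  ---------------------------------------------------------------
  have hP1 : star u * u = 1 := by
    set G₀ : Set H := {ξ | ∃ w ∈ W, ∃ η, (w * e) η = ξ} with hG₀_def
    set K₀ : Submodule ℂ H := (Submodule.span ℂ G₀).topologicalClosure with hK₀_def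
    haveI : CompleteSpace K₀ :=
      (Submodule.span ℂ G₀).isClosed_topologicalClosure.completeSpace_coe
    set z : H →L[ℂ] H := K₀.subtypeL ∘L K₀.orthogonalProjectionOnto with hz_def
    have hG₀K₀ : ∀ ξ ∈ G₀, ξ ∈ K₀ := fun ξ hξ =>
      Submodule.le_topologicalClosure _ (Submodule.subset_span hξ)
    -- commutant elements map G₀ to itself
    have hmem_c : ∀ c ∈ Set.centralizer (W : Set (H →L[ℂ] H)), ∀ ξ ∈ G₀, c ξ ∈ G₀ := by
      rintro c hc ξ ⟨w, hw, η, rfl⟩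
      refine ⟨w, hw, c η, ?_⟩
      rw [← ContinuousLinearMap.mul_apply, hc _ (SetLike.mem_coe.mpr (mul_mem hw heW)),
        ContinuousLinearMap.mul_apply]
    -- W elements map G₀ to itself
    have hmem_W : ∀ g ∈ W, ∀ ξ ∈ G₀, g ξ ∈ G₀ := by
      rintro g hg ξ ⟨w, hw, η, rfl⟩
      exact ⟨g * w, mul_mem hg hw, η, by rw [mul_assoc]; rfl⟩
    have hzW : z ∈ W := by
      have : z ∈ Set.centralizer (Set.centralizer (W : Set (H →L[ℂ] H))) := by
        rw [Set.mem_centralizer_iff]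
        intro c hc
        exact vne_proj_comm K₀ c (vne_maps_closure c G₀ (hmem_c c hc))
          (vne_maps_closure (star c) G₀ (hmem_c _ (hstar_cent c hc)))
      rwa [W.centralizer_centralizer] at this
    have hzcomm : ∀ g ∈ W, z * g = g * z := by
      intro g hg
      exact (vne_proj_comm K₀ g (vne_maps_closure g G₀ (hmem_W g hg))
        (vne_maps_closure (star g) G₀ (hmem_W _ (star_mem hg)))).symm
    have hzsa : IsSelfAdjoint z := isSelfAdjoint_starProjection K₀
    have hzidem : z * z = z := by
      ext ξ
      exact vne_proj_fix K₀ (vne_proj_mem K₀ ξ)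
    have hze : e * z = e := by
      have hze' : z * e = e := by
        ext ξ
        exact vne_proj_fix K₀ (hG₀K₀ _ ⟨1, one_mem W, ξ, by simp⟩)
      calc e * z = star (star z * star e) := by simp
        _ = star (z * e) := by rw [hzsa.star_eq, hestar]
        _ = star e := by rw [hze']
        _ = e := hestar
    have hz1 : z = 1 := hcentral z hzW hzcomm hzsa hzidem hze
    -- K₀ is everything, and star u * u is the identity on it
    have hvan : ∀ ξ ∈ G₀, (star u * u - 1) ξ = 0 := by
      rintro ξ ⟨w, hw, η, rfl⟩
      have := h_left w hw
      rw [← ContinuousLinearMap.mul_apply, sub_mul, this, one_mul, sub_self,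
        ContinuousLinearMap.zero_apply]
    have htot : ∀ ξ : H, (star u * u - 1) ξ = 0 := by
      intro ξ
      have hξK : ξ ∈ K₀ := by
        have : z ξ = ξ := by rw [hz1]; rfl
        rw [← this]; exact vne_proj_mem K₀ ξ
      exact vne_vanish_closure _ G₀ hvan ξ hξK
    have : star u * u - 1 = 0 := by ext ξ; exact htot ξ
    exact sub_eq_zero.mp this
    ---------------------------------------------------------------
  -- Step 2 : Schroeder-Bernstein style construction
  ---------------------------------------------------------------
  set f : H →L[ℂ] H := 1 - e with hf_def
  have hfu : f * u = 0 := by rw [hf_def, sub_mul, one_mul, heu, sub_self]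
  have hfstar : star f = f := by rw [hf_def, star_sub, star_one, hestar]
  have huf : star u * f = 0 := by
    have := congrArg star hfu
    rwa [star_mul, hfstar, star_zero] at this
  have hff : f * f = f := by
    rw [hf_def, mul_sub, mul_one, sub_mul, one_mul, he₂]
    abel
  have hfW : f ∈ W := sub_mem (one_mem W) heW
  set G₂ : Set H := {ξ | ∃ (n : ℕ) (η : H), (u ^ n * f) η = ξ} with hG₂_def
  set K : Submodule ℂ H := (Submodule.span ℂ G₂).topologicalClosure with hK_def
  haveI : CompleteSpace K := (Submodule.span ℂ G₂).isClosed_topologicalClosure.completeSpace_coe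
  set F : H →L[ℂ] H := K.subtypeL ∘L K.orthogonalProjectionOnto with hF_def
  have hG₂K : ∀ ξ ∈ G₂, ξ ∈ K := fun ξ hξ =>
    Submodule.le_topologicalClosure _ (Submodule.subset_span hξ)
  have hFsa : star F = F := (isSelfAdjoint_starProjection K).star_eq
  have hFF : F * F = F := by
    ext ξ
    exact vne_proj_fix K (vne_proj_mem K ξ)
  have hmem_c₂ : ∀ c ∈ Set.centralizer (W : Set (H →L[ℂ] H)), ∀ ξ ∈ G₂, c ξ ∈ G₂ := by
    rintro c hc ξ ⟨n, η, rfl⟩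
    refine ⟨n, c η, ?_⟩
    rw [← ContinuousLinearMap.mul_apply,
      hc _ (SetLike.mem_coe.mpr (mul_mem (pow_mem huW n) hfW)), ContinuousLinearMap.mul_apply]
  have hFW : F ∈ W := by
    have : F ∈ Set.centralizer (Set.centralizer (W : Set (H →L[ℂ] H))) := by
      rw [Set.mem_centralizer_iff]
      intro c hc
      exact vne_proj_comm K c (vne_maps_closure c G₂ (hmem_c₂ c hc))
        (vne_maps_closure (star c) G₂ (hmem_c₂ _ (hstar_cent c hc)))
    rwa [W.centralizer_centralizer] at this
  have hFf : F * f = f := by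
    ext ξ
    simp only [ContinuousLinearMap.mul_apply]
    exact vne_proj_fix K (hG₂K _ ⟨0, ξ, by simp⟩)
  have hfF : f * F = f := by
    have := congrArg star hFf
    rwa [star_mul, hfstar, hFsa] at this
  have humaps : ∀ ξ ∈ G₂, u ξ ∈ G₂ := by
    rintro ξ ⟨n, η, rfl⟩
    refine ⟨n + 1, η, ?_⟩
    rw [pow_succ', mul_assoc]
    rfl
  have huK : ∀ x ∈ K, u x ∈ K := vne_maps_closure u G₂ humaps
  have hFuF : F * (u * F) = u * F := by
    ext ξ
    simp only [ContinuousLinearMap.mul_apply]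
    exact vne_proj_fix K (huK _ (vne_proj_mem K ξ))
  set Q : H →L[ℂ] H := u * F * star u with hQ_def
  have hQsa : star Q = Q := by
    simp only [hQ_def, star_mul, star_star, hFsa, mul_assoc]
  have hFQ : F * Q = Q := by
    ext ξ
    simp only [hQ_def, ContinuousLinearMap.mul_apply]
    exact vne_proj_fix K (huK _ (vne_proj_mem K _))
  have hQF : Q * F = Q := by
    have := congrArg star hFQ
    rwa [star_mul, hFsa, hQsa] at this
  have hQf : Q * f = 0 := by
    rw [hQ_def, mul_assoc, huf, mul_zero]
  have hfQ : f * Q = 0 := by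
    rw [hQ_def, ← mul_assoc, ← mul_assoc, hfu, zero_mul, zero_mul]
  have hQQ : Q * Q = Q := by
    calc Q * Q = u * F * (star u * u) * (F * star u) := by rw [hQ_def]; noncomm_ring
      _ = u * (F * F) * star u := by rw [hP1, mul_one]; noncomm_ring
      _ = Q := by rw [hFF, hQ_def]
  set Gop : H →L[ℂ] H := F - f - Q with hGop_def
  have hGopF : Gop * F = Gop := by
    rw [hGop_def, sub_mul, sub_mul, hFF, hfF, hQF]
  have hGopQ : Gop * Q = 0 := by
    rw [hGop_def, sub_mul, sub_mul, hFQ, hfQ, hQQ]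
    abel
  have hGopf : Gop * f = 0 := by
    rw [hGop_def, sub_mul, sub_mul, hFf, hff, hQf]
    abel
  have hGopn : ∀ n : ℕ, Gop * (u ^ n * f) = 0 := by
    intro n
    cases n with
    | zero => rw [pow_zero, one_mul]; exact hGopf
    | succ n =>
      have hfix : F * (u ^ n * f) = u ^ n * f := by
        ext η
        simp only [ContinuousLinearMap.mul_apply]
        exact vne_proj_fix K (hG₂K _ ⟨n, η, rfl⟩)
      have key : Q * (u ^ (n + 1) * f) = u ^ (n + 1) * f := by
        calc Q * (u ^ (n + 1) * f) = u * F * ((star u * u) * (u ^ n * f)) := by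
              rw [hQ_def, pow_succ']; noncomm_ring
          _ = u * (F * (u ^ n * f)) := by rw [hP1, one_mul]; noncomm_ring
          _ = u ^ (n + 1) * f := by rw [hfix, pow_succ', mul_assoc]
      calc Gop * (u ^ (n + 1) * f) = Gop * (Q * (u ^ (n + 1) * f)) := by rw [key]
        _ = (Gop * Q) * (u ^ (n + 1) * f) := (mul_assoc Gop Q _).symm
        _ = 0 := by rw [hGopQ, zero_mul]
  have hGopvan : ∀ ξ ∈ G₂, Gop ξ = 0 := by
    rintro ξ ⟨n, η, rfl⟩
    rw [← ContinuousLinearMap.mul_apply, hGopn n]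
    rfl
  have hGop0 : Gop = 0 := by
    ext ξ
    have h1 := ContinuousLinearMap.ext_iff.mp hGopF ξ
    have h2 : Gop (F ξ) = 0 := vne_vanish_closure Gop G₂ hGopvan _ (vne_proj_mem K ξ)
    simp only [ContinuousLinearMap.mul_apply] at h1
    rw [ContinuousLinearMap.zero_apply, ← h1, h2]
  have hQeq : Q = F - f := by
    have h : F - f - Q = 0 := by rw [← hGop_def]; exact hGop0
    have := sub_eq_zero.mp h
    exact this.symm
  -- the final partial isometry
  set U : H →L[ℂ] H := u * F + (1 - F) with hU_def
  have hUW : U ∈ W := by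
    rw [hU_def]
    exact add_mem (mul_mem huW hFW) (sub_mem (one_mem W) hFW)
  have hstarU : star U = F * star u + (1 - F) := by
    rw [hU_def, star_add, star_mul, hFsa, star_sub, star_one, hFsa]
  have hcross : (1 - F) * (u * F) = 0 := by
    rw [sub_mul, one_mul, hFuF, sub_self]
  have hT2 : (F * star u) * (1 - F) = 0 := by
    have := congrArg star hcross
    rwa [star_mul, star_mul, star_sub, star_one, hFsa, star_zero] at this
  have hT3 : (u * F) * (1 - F) = 0 := by
    rw [mul_sub, mul_one, mul_assoc, hFF, sub_self]
  have hT4 : (1 - F) * (F * star u) = 0 := by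
    rw [sub_mul, one_mul, ← mul_assoc, hFF, sub_self]
  have h1F : (1 - F) * (1 - F) = 1 - F := by
    rw [mul_sub, mul_one, sub_mul, one_mul, hFF]
    abel
  have hU1 : star U * U = 1 := by
    calc star U * U
        = F * (star u * u) * F + (F * star u) * (1 - F) + (1 - F) * (u * F)
            + (1 - F) * (1 - F) := by rw [hstarU, hU_def]; noncomm_ring
      _ = F + 0 + 0 + (1 - F) := by rw [hP1, mul_one, hFF, hT2, hcross, h1F]
      _ = 1 := by abel
  have hUe : U * star U = e := by
    calc U * star U
        = u * (F * F) * star u + (u * F) * (1 - F) + (1 - F) * (F * star u)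
            + (1 - F) * (1 - F) := by rw [hU_def, hstarU]; noncomm_ring
      _ = Q + 0 + 0 + (1 - F) := by rw [hFF, hT3, hT4, h1F, hQ_def]
      _ = (F - f) + 0 + 0 + (1 - F) := by rw [hQeq]
      _ = 1 - f := by abel
      _ = e := by rw [hf_def, sub_sub_cancel]
  exact ⟨U, hUW, hU1, hUe⟩
end

section
/- Every element $x$ of a TRO $T \subseteq \mathcal{B}(H)$ has a cube root: there exists $y \in T$ with $x = yy^*y$. -/
/-!
With `a = x x* ≥ 0` the cube root is `y = a^{-1/3} x`: then `y y* = a^{-1/3} a a^{-1/3} = a^{1/3}`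
and `y y* y = x`. As `t ↦ t^{-1/3}` is singular at `0`, `y` is obtained as the limit of
`y_ε = f_ε(a) x` with `f_ε(t) = max(t, ε)^{-1/3}`. The C*-identity
`‖g(a) x‖² = ‖(g(a) x)(g(a) x)*‖ = ‖(g² · id)(a)‖` reduces all estimates to scalar ones on the
spectrum of `a`: `(f_ε - f_δ)² t ≤ η^{1/3}` for `ε, δ ≤ η` makes `y_ε` Cauchy, and
`(1 - f_ε³ t)² t ≤ ε` gives `y_ε y_ε* y_ε → x`. Each `y_ε` lies in `T` because `u x ∈ T` for every
`u` in the closed star algebra generated by `a`, as `a w x = x x* (w x)`.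
-/

open Filter Topology

noncomputable def truncInvCbrt (ε t : ℝ) : ℝ := max t ε ^ (-(3 : ℝ)⁻¹)

lemma continuous_truncInvCbrt {ε : ℝ} (hε : 0 < ε) : Continuous (truncInvCbrt ε) :=
  (continuous_id.max continuous_const).rpow_const fun t =>
    .inl (hε.trans_le (le_max_right t ε)).ne'

lemma rpow_neg_inv_three_sq_mul_le {u t : ℝ} (hu : 0 < u) (htu : t ≤ u) :
    (u ^ (-(3 : ℝ)⁻¹)) ^ 2 * t ≤ u ^ (3 : ℝ)⁻¹ := calc
  (u ^ (-(3 : ℝ)⁻¹)) ^ 2 * t ≤ (u ^ (-(3 : ℝ)⁻¹)) ^ 2 * u := by gcongr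
  _ = u ^ (3 : ℝ)⁻¹ := by
    rw [← Real.rpow_natCast, ← Real.rpow_mul hu.le, ← Real.rpow_add_one hu.ne']
    norm_num

lemma truncInvCbrt_sub_sq_mul_le {ε δ η t : ℝ} (hε : 0 < ε) (hεη : ε ≤ η) (hδ : 0 < δ)
    (hδη : δ ≤ η) (ht : 0 ≤ t) :
    (truncInvCbrt ε t - truncInvCbrt δ t) ^ 2 * t ≤ η ^ (3 : ℝ)⁻¹ := by
  unfold truncInvCbrt
  rcases le_or_gt η t with hηt | htη
  · rw [max_eq_left (hεη.trans hηt), max_eq_left (hδη.trans hηt), sub_self, zero_pow two_ne_zero,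
      zero_mul]
    exact Real.rpow_nonneg (hε.le.trans hεη) _
  have hbound {u : ℝ} (hu : 0 < u) (huη : u ≤ η) :
      (max t u ^ (-(3 : ℝ)⁻¹)) ^ 2 * t ≤ η ^ (3 : ℝ)⁻¹ :=
    (rpow_neg_inv_three_sq_mul_le (hu.trans_le (le_max_right _ _)) (le_max_left _ _)).trans
      (by gcongr; exact max_le htη.le huη)
  have hp := Real.rpow_nonneg (le_max_of_le_right hε.le : 0 ≤ max t ε) (-(3 : ℝ)⁻¹)
  have hq := Real.rpow_nonneg (le_max_of_le_right hδ.le : 0 ≤ max t δ) (-(3 : ℝ)⁻¹)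
  rcases le_total (max t ε ^ (-(3 : ℝ)⁻¹)) (max t δ ^ (-(3 : ℝ)⁻¹)) with hpq | hpq
  · exact (mul_le_mul_of_nonneg_right (by nlinarith) ht).trans (hbound hδ hδη)
  · exact (mul_le_mul_of_nonneg_right (by nlinarith) ht).trans (hbound hε hεη)

lemma one_sub_truncInvCbrt_pow_three_mul_sq_mul_le {ε t : ℝ} (hε : 0 < ε) (ht : 0 ≤ t) :
    (1 - truncInvCbrt ε t ^ 3 * t) ^ 2 * t ≤ ε := by
  have hcube : truncInvCbrt ε t ^ 3 = (max t ε)⁻¹ := by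
    rw [truncInvCbrt, ← Real.rpow_natCast, ← Real.rpow_mul (hε.le.trans (le_max_right t ε))]
    norm_num [Real.rpow_neg_one]
  rw [hcube]
  rcases le_total ε t with hεt | htε
  · rw [max_eq_left hεt, inv_mul_cancel₀ (hε.trans_le hεt).ne', sub_self, zero_pow two_ne_zero,
      zero_mul]
    exact hε.le
  · rw [max_eq_right htε]
    have hnonneg : 0 ≤ 1 - ε⁻¹ * t := by
      rw [sub_nonneg, inv_mul_le_iff₀ hε]
      linarith
    have hle_one : 1 - ε⁻¹ * t ≤ 1 := sub_le_self _ (by positivity)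
    calc (1 - ε⁻¹ * t) ^ 2 * t ≤ 1 ^ 2 * t := by gcongr
      _ ≤ ε := by linarith

section CStarAlgebra

variable {A : Type*} [CStarAlgebra A]

lemma spectrum_mul_star_self_nonneg (x : A) : ∀ t ∈ spectrum ℝ (x * star x), 0 ≤ t := by
  simpa using spectrum_star_mul_self_nonneg (b := star x)

lemma cfc_mul_mul_star_cfc_mul (x : A) {g : ℝ → ℝ}
    (hg : ContinuousOn g (spectrum ℝ (x * star x))) :
    cfc g (x * star x) * x * star (cfc g (x * star x) * x) =
      cfc (fun t => g t ^ 2 * t) (x * star x) := by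
  have hfactor : cfc (fun t => g t ^ 2 * t) (x * star x) =
      cfc (fun t => g t * t * g t) (x * star x) :=
    cfc_congr fun t _ => by ring
  rw [hfactor, cfc_mul .., cfc_mul .., cfc_id' ℝ (x * star x), star_mul,
    (cfc_predicate g _ : IsSelfAdjoint _).star_eq]
  simp only [mul_assoc]

lemma cfc_mul_mul_star_mul_self (x : A) {g : ℝ → ℝ}
    (hg : ContinuousOn g (spectrum ℝ (x * star x))) :
    cfc g (x * star x) * x * star (cfc g (x * star x) * x) * (cfc g (x * star x) * x) =
      cfc (fun t => g t ^ 3 * t) (x * star x) * x := by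
  have hfactor : cfc (fun t => g t ^ 3 * t) (x * star x) =
      cfc (fun t => g t ^ 2 * t * g t) (x * star x) :=
    cfc_congr fun t _ => by ring
  rw [cfc_mul_mul_star_cfc_mul x hg, hfactor, cfc_mul (fun t => g t ^ 2 * t) g (x * star x),
    mul_assoc]

lemma norm_cfc_mul_sub_cfc_mul_le (x : A) {g h : ℝ → ℝ} {c : ℝ}
    (hg : ContinuousOn g (spectrum ℝ (x * star x)))
    (hh : ContinuousOn h (spectrum ℝ (x * star x))) (hc : 0 ≤ c)
    (hgh : ∀ t ∈ spectrum ℝ (x * star x), (g t - h t) ^ 2 * t ≤ c) :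
    ‖cfc g (x * star x) * x - cfc h (x * star x) * x‖ ≤ √c := by
  rw [← sub_mul, ← cfc_sub .., ← Real.sqrt_sq (norm_nonneg _)]
  gcongr
  rw [sq, ← CStarRing.norm_self_mul_star,
    cfc_mul_mul_star_cfc_mul x (g := fun t => g t - h t) (hg.sub hh)]
  refine norm_cfc_le hc fun t ht => ?_
  rw [Real.norm_of_nonneg (by have := spectrum_mul_star_self_nonneg x t ht; positivity)]
  exact hgh t ht

lemma mul_mem_of_mem_elemental {T : Set A} (hTclosed : IsClosed T)
    (hTadd : ∀ x ∈ T, ∀ y ∈ T, x + y ∈ T) (hTsmul : ∀ c : ℝ, ∀ x ∈ T, c • x ∈ T)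
    (hTtro : ∀ x ∈ T, ∀ y ∈ T, ∀ z ∈ T, x * star y * z ∈ T) {x u : A} (hx : x ∈ T)
    (hu : u ∈ StarAlgebra.elemental ℝ (x * star x)) : u * x ∈ T := by
  -- `{u | u * x ∈ T}` need not be closed under products; this stronger predicate is.
  suffices h : ∀ w, w * x ∈ T → u * w * x ∈ T by simpa using h 1 (by simpa using hx)
  induction hu using StarAlgebra.elemental.induction_on with
  | self => exact fun w hw => by simpa only [mul_assoc] using hTtro x hx x hx _ hw
  | star_self =>
    intro w hw
    simpa only [star_mul, star_star, mul_assoc] using hTtro x hx x hx _ hw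
  | algebraMap r =>
    intro w hw
    simpa [Algebra.algebraMap_eq_smul_one, mul_assoc] using hTsmul r _ hw
  | add u _ v _ hu hv =>
    intro w hw
    simpa only [add_mul] using hTadd _ (hu w hw) _ (hv w hw)
  | mul u _ v _ hu hv => exact fun w hw => by simpa only [mul_assoc] using hu (v * w) (hv w hw)
  | closure s _ hs v hv =>
    exact fun w hw => closure_minimal (fun u hu => hs u hu w hw)
      (hTclosed.preimage (by fun_prop)) hv

noncomputable def cubeRootApprox (x : A) (ε : ℝ) : A := cfc (truncInvCbrt ε) (x * star x) * x

lemma dist_cubeRootApprox_le (x : A) {ε δ η : ℝ} (hε : 0 < ε) (hεη : ε ≤ η) (hδ : 0 < δ)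
    (hδη : δ ≤ η) : dist (cubeRootApprox x ε) (cubeRootApprox x δ) ≤ √(η ^ (3 : ℝ)⁻¹) := by
  rw [dist_eq_norm]
  exact norm_cfc_mul_sub_cfc_mul_le x (continuous_truncInvCbrt hε).continuousOn
    (continuous_truncInvCbrt hδ).continuousOn (Real.rpow_nonneg (hε.le.trans hεη) _)
    fun t ht => truncInvCbrt_sub_sq_mul_le hε hεη hδ hδη (spectrum_mul_star_self_nonneg x t ht)

lemma norm_sub_cubeRootApprox_cube_le (x : A) {ε : ℝ} (hε : 0 < ε) :
    ‖x - cubeRootApprox x ε * star (cubeRootApprox x ε) * cubeRootApprox x ε‖ ≤ √ε := by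
  have hcont := continuous_truncInvCbrt hε
  have hx : x = cfc (fun _ => (1 : ℝ)) (x * star x) * x := by
    rw [cfc_const_one ℝ (x * star x), one_mul]
  rw [cubeRootApprox, cfc_mul_mul_star_mul_self x hcont.continuousOn]
  nth_rw 1 [hx]
  exact norm_cfc_mul_sub_cfc_mul_le x continuousOn_const (by fun_prop) hε.le fun t ht =>
    one_sub_truncInvCbrt_pow_three_mul_sq_mul_le hε (spectrum_mul_star_self_nonneg x t ht)

lemma cauchySeq_cubeRootApprox (x : A) {e : ℕ → ℝ} (he : ∀ n, 0 < e n) (he_anti : Antitone e)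
    (he_lim : Tendsto e atTop (𝓝 0)) : CauchySeq fun n => cubeRootApprox x (e n) :=
  cauchySeq_of_le_tendsto_0 (fun N => √(e N ^ (3 : ℝ)⁻¹))
    (fun n m N hn hm => dist_cubeRootApprox_le x (he n) (he_anti hn) (he m) (he_anti hm))
    (by simpa using (he_lim.rpow_const (.inr (by norm_num : (0 : ℝ) ≤ 3⁻¹))).sqrt)

lemma tendsto_cubeRootApprox_cube (x : A) {e : ℕ → ℝ} (he : ∀ n, 0 < e n)
    (he_lim : Tendsto e atTop (𝓝 0)) :
    Tendsto (fun n => cubeRootApprox x (e n) * star (cubeRootApprox x (e n)) *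
      cubeRootApprox x (e n)) atTop (𝓝 x) := by
  refine tendsto_iff_norm_sub_tendsto_zero.2 <| squeeze_zero (fun _ => norm_nonneg _)
    (fun n => ?_) (by simpa using he_lim.sqrt)
  rw [norm_sub_rev]
  exact norm_sub_cubeRootApprox_cube_le x (he n)

end CStarAlgebra

theorem tro_cube_root_general {A : Type*} [CStarAlgebra A] (T : Set A)
    (hTclosed : IsClosed T)
    (hTadd : ∀ x ∈ T, ∀ y ∈ T, x + y ∈ T)
    (hTsmul : ∀ c : ℂ, ∀ x ∈ T, c • x ∈ T)
    (hTtro : ∀ x ∈ T, ∀ y ∈ T, ∀ z ∈ T, x * star y * z ∈ T) :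
    ∀ x ∈ T, ∃ y ∈ T, x = y * star y * y := by
  intro x hx
  set e : ℕ → ℝ := fun n => 1 / ((n : ℝ) + 1)
  have he : ∀ n, 0 < e n := fun n => Nat.one_div_pos_of_nat
  have he_anti : Antitone e := fun m n h => Nat.one_div_le_one_div h
  have he_lim : Tendsto e atTop (𝓝 0) := tendsto_one_div_add_atTop_nhds_zero_nat
  have hmem : ∀ n, cubeRootApprox x (e n) ∈ T := fun n =>
    mul_mem_of_mem_elemental hTclosed hTadd (fun c y hy => by simpa using hTsmul c y hy) hTtro hx
      (cfc_mem_elemental _ _)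
  obtain ⟨z, hz⟩ := cauchySeq_tendsto_of_complete (cauchySeq_cubeRootApprox x he he_anti he_lim)
  exact ⟨z, hTclosed.mem_of_tendsto hz (.of_forall hmem),
    tendsto_nhds_unique (tendsto_cubeRootApprox_cube x he he_lim) ((hz.mul hz.star).mul hz)⟩

/-- Every element `x` of a TRO `T` (a norm-closed subspace of a C*-algebra with
`a b* c ∈ T` for `a, b, c ∈ T`) has a cube root: some `y ∈ T` with `x = y y* y`. -/
theorem tro_cube_root {A : Type*} [CStarAlgebra A] (T : Set A)
    (hTclosed : IsClosed T) (hT0 : (0 : A) ∈ T)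
    (hTadd : ∀ x ∈ T, ∀ y ∈ T, x + y ∈ T) (hTneg : ∀ x ∈ T, -x ∈ T)
    (hTsmul : ∀ c : ℂ, ∀ x ∈ T, c • x ∈ T)
    (hTtro : ∀ x ∈ T, ∀ y ∈ T, ∀ z ∈ T, x * star y * z ∈ T) :
    ∀ x ∈ T, ∃ y ∈ T, x = y * star y * y :=
  tro_cube_root_general T hTclosed hTadd hTsmul hTtro
end

section
/- Let $A$ be a C*-algebra and $a, b \in A$ with $\{a,a,b\} = 0$ where $\{x,y,z\} = (xy^*z + zy^*x)/2$, i.e., $aa^*b + ba^*a = 0$. Then $a^*b = 0$ and $ab^* = 0$. -/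
/-!
Multiplying the hypothesis by `a*` on the left shows that `c = a* b` anticommutes with the
positive element `x = a* a`. Then `c` commutes with `x²`, hence with its square root `x`, so
`x c = 0`. The C*-identity turns `a* a c = 0` into `a c = a a* b = 0`, then into `a* b = 0`;
the hypothesis now reads `b a* a = 0`, which gives `a b* = 0` in the same way.
-/

section

variable {A : Type*} [NonUnitalCStarAlgebra A] [PartialOrder A] [StarOrderedRing A]

theorem Commute.of_nonneg_of_mul_self_left {q c : A} (hq : 0 ≤ q) (hc : Commute (q * q) c) :
    Commute q c := by
  rw [← CFC.sqrt_mul_self q hq]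
  exact hc.cfcₙ_nnreal NNReal.sqrt

theorem mul_eq_zero_of_nonneg_of_mul_add_mul_eq_zero {x c : A} (hx : 0 ≤ x)
    (h : x * c + c * x = 0) : x * c = 0 := by
  have hxc : x * c = -(c * x) := eq_neg_of_add_eq_zero_left h
  have hsq : Commute (x * x) c :=
    calc x * x * c = x * (x * c) := mul_assoc _ _ _
      _ = -(x * (c * x)) := by rw [hxc, mul_neg]
      _ = -(x * c * x) := by rw [mul_assoc]
      _ = c * (x * x) := by rw [hxc, neg_mul, neg_neg, mul_assoc]
  rw [← (Commute.of_nonneg_of_mul_self_left hx hsq).eq, ← two_smul ℝ] at h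
  exact (smul_eq_zero.mp h).resolve_left two_ne_zero

end

theorem mul_eq_zero_of_star_mul_self_mul_eq_zero {A : Type*} [NonUnitalNormedRing A] [StarRing A]
    [CStarRing A] {a c : A} (h : star a * a * c = 0) : a * c = 0 := by
  rw [← CStarRing.star_mul_self_eq_zero_iff, star_mul, mul_assoc, ← mul_assoc (star a), h,
    mul_zero]

/-- If `a`, `b` are elements of a C*-algebra with `{a,a,b} = 0`, i.e.
`a a* b + b a* a = 0`, then `a* b = 0` and `a b* = 0`. -/
theorem orthogonal_of_jordan_triple_zero {A : Type*} [CStarAlgebra A] (a b : A)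
    (h : a * star a * b + b * (star a * a) = 0) :
    star a * b = 0 ∧ a * star b = 0 := by
  let := CStarAlgebra.spectralOrder A
  let := CStarAlgebra.spectralOrderedRing A
  have hanti : star a * a * (star a * b) + star a * b * (star a * a) = 0 := by
    simpa only [mul_add, ← mul_assoc, mul_zero] using congrArg (star a * ·) h
  have haab : a * star a * b = 0 := by
    rw [mul_assoc]
    exact mul_eq_zero_of_star_mul_self_mul_eq_zero
      (mul_eq_zero_of_nonneg_of_mul_add_mul_eq_zero (star_mul_self_nonneg a) hanti)
  have hbaa : b * (star a * a) = 0 := by rwa [haab, zero_add] at h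
  constructor
  · exact mul_eq_zero_of_star_mul_self_mul_eq_zero (by rwa [star_star])
  · refine mul_eq_zero_of_star_mul_self_mul_eq_zero ?_
    simpa only [star_mul, star_star, mul_assoc, star_zero] using congrArg star hbaa
end
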